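/- Let γ ≥ 1, let 𝒫 be the projection operator, let f : ℝ^d → ℝ^d satisfy ‖f(y)‖ ≤ C₂(1 + ‖y‖)^{γ} for all y ∈ ℝ^d, and let g : ℝ^d → ℝ^{d×m} satisfy, for some p₀ ≥ 1 and L₁ ≥ 0, the coercivity condition 2⟨y, f(y)⟩ + (2p₀ − 1)‖g(y)‖² ≤ L₁(1 + ‖y‖²) for all y ∈ ℝ^d. Then for every integer p ≥ 2 there exists a constant C, depending only on L₁, C₂, γ, p and p₀ (and not on h or x), such that for all h ∈ (0,1] and all x ∈ ℝ^d: ‖g(𝒫(x))‖^{2p} ≤ (L₁/(2p₀ − 1))^{p}·(1 + ‖𝒫(x)‖²)^{p} + C h^{−p/2}·(1 + ‖𝒫(x)‖²)^{p−1}. -/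
import Mathlib


open scoped RealInnerProductSpace BigOperators

/-- The projection operator `𝒫(x) = min {1, h^{-1/(2γ)} ‖x‖⁻¹} • x`
(with `𝒫(0) = 0`, since in `ℝ` we have `0⁻¹ = 0`). -/
noncomputable def proj {d : ℕ} (γ h : ℝ) (x : EuclideanSpace ℝ (Fin d)) :
    EuclideanSpace ℝ (Fin d) :=
  min 1 (h ^ (-(1 : ℝ) / (2 * γ)) * ‖x‖⁻¹) • x

lemma two_pow_bound (x y : ℝ) (hx : 0 ≤ x) (hy : 0 ≤ y) (n : ℕ) :
    (x + y) ^ n ≤ 2 ^ n * (x ^ n + y ^ n) := by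
  have h1 : x + y ≤ 2 * max x y := by
    rcases le_total x y with h | h
    · nlinarith [le_max_right x y, le_max_left x y]
    · nlinarith [le_max_left x y, le_max_right x y]
  have h2 : (x + y) ^ n ≤ (2 * max x y) ^ n :=
    pow_le_pow_left₀ (by linarith) h1 n
  have h3 : (2 * max x y) ^ n = 2 ^ n * (max x y) ^ n := by rw [mul_pow]
  have h4 : (max x y) ^ n ≤ x ^ n + y ^ n := by
    rcases le_total x y with h | h
    · rw [max_eq_right h]; nlinarith [pow_nonneg hx n]
    · rw [max_eq_left h]; nlinarith [pow_nonneg hy n]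
  calc (x+y)^n ≤ 2^n * (max x y)^n := by rw [← h3]; exact h2
    _ ≤ 2^n * (x^n + y^n) := by
        have : (0:ℝ) ≤ 2^n := by positivity
        nlinarith

lemma aux_pow (x y : ℝ) (hx : 0 ≤ x) (hy : 0 ≤ y) {p : ℕ} (hp : 1 ≤ p) :
    (x + y) ^ p ≤ x ^ p + (p : ℝ) * 2 ^ (p - 1) * (x ^ (p - 1) * y + y ^ p) := by
  have hxy : 0 ≤ x + y := by linarith
  have key := geom_sum₂_mul (x + y) x p
  rw [add_sub_cancel_left] at key
  have hterm : ∀ i ∈ Finset.range p, (x+y) ^ i * x ^ (p - 1 - i) ≤ (x+y) ^ (p-1) := by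
    intro i hi
    rw [Finset.mem_range] at hi
    calc (x+y)^i * x^(p-1-i) ≤ (x+y)^i * (x+y)^(p-1-i) := by
          apply mul_le_mul_of_nonneg_left (pow_le_pow_left₀ hx (by linarith) _) (by positivity)
      _ = (x+y)^(i + (p-1-i)) := (pow_add _ _ _).symm
      _ = (x+y)^(p-1) := by congr 1; omega
  have hsum : (∑ i ∈ Finset.range p, (x+y) ^ i * x ^ (p - 1 - i)) ≤ (p:ℝ) * (x+y)^(p-1) := by
    calc (∑ i ∈ Finset.range p, (x+y) ^ i * x ^ (p - 1 - i))
        ≤ ∑ _i ∈ Finset.range p, (x+y)^(p-1) := Finset.sum_le_sum hterm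
      _ = (p:ℝ) * (x+y)^(p-1) := by simp [mul_comm]
  have h2 : (x+y)^(p-1) ≤ 2^(p-1) * (x^(p-1) + y^(p-1)) := two_pow_bound x y hx hy _
  have hyp : y^(p-1) * y = y^p := by
    rw [← pow_succ]; congr 1; omega
  have hpn : (0:ℝ) ≤ (p:ℝ) := by positivity
  have s1 : (∑ i ∈ Finset.range p, (x+y) ^ i * x ^ (p - 1 - i)) * y ≤ (p:ℝ) * (x+y)^(p-1) * y :=
    mul_le_mul_of_nonneg_right hsum hy
  have s2 : (p:ℝ) * (x+y)^(p-1) * y ≤ (p:ℝ) * (2^(p-1) * (x^(p-1) + y^(p-1))) * y :=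
    mul_le_mul_of_nonneg_right (mul_le_mul_of_nonneg_left h2 hpn) hy
  have s3 : (p:ℝ) * (2^(p-1) * (x^(p-1) + y^(p-1))) * y
      = (p:ℝ) * 2^(p-1) * (x^(p-1)*y + y^(p-1)*y) := by ring
  rw [hyp] at s3
  linarith [key, s1, s2]


/-- Under the coercivity condition and polynomial growth of `f` (the
diffusion `g` is encoded by its columns, its squared Frobenius norm being `∑ j, ‖g j x‖²`),
for every integer `p ≥ 2` there is a constant `C` independent of the step size `h` and of
`x` such that `‖g(𝒫(x))‖^{2p} ≤ (L₁/(2p₀-1))^p (1 + ‖𝒫(x)‖²)^p + C h^{-p/2} (1 + ‖𝒫(x)‖²)^{p-1}`. -/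
theorem stmt_8 {d m : ℕ} (γ : ℝ) (hγ : 1 ≤ γ) (C₂ : ℝ) (hC₂ : 0 ≤ C₂)
    (f : EuclideanSpace ℝ (Fin d) → EuclideanSpace ℝ (Fin d))
    (g : Fin m → EuclideanSpace ℝ (Fin d) → EuclideanSpace ℝ (Fin d))
    (hf : ∀ y : EuclideanSpace ℝ (Fin d), ‖f y‖ ≤ C₂ * (1 + ‖y‖) ^ γ)
    (p₀ L₁ : ℝ) (hp₀ : 1 ≤ p₀) (hL₁ : 0 ≤ L₁)
    (hcoer : ∀ y : EuclideanSpace ℝ (Fin d),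
      2 * ⟪y, f y⟫ + (2 * p₀ - 1) * ∑ j, ‖g j y‖ ^ 2 ≤ L₁ * (1 + ‖y‖ ^ 2)) :
    ∀ p : ℕ, 2 ≤ p → ∃ C : ℝ,
      ∀ h : ℝ, 0 < h → h ≤ 1 → ∀ x : EuclideanSpace ℝ (Fin d),
        (∑ j, ‖g j (proj γ h x)‖ ^ 2) ^ p ≤
          (L₁ / (2 * p₀ - 1)) ^ p * (1 + ‖proj γ h x‖ ^ 2) ^ p
            + C * h ^ (-(p : ℝ) / 2) * (1 + ‖proj γ h x‖ ^ 2) ^ (p - 1) := by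
  intro p hp
  have hp1 : 1 ≤ p := by omega
  have hγ0 : (0:ℝ) < γ := by linarith
  have hP : (0:ℝ) < 2 * p₀ - 1 := by linarith
  set a := L₁ / (2 * p₀ - 1) with hadef
  have ha : 0 ≤ a := div_nonneg hL₁ hP.le
  set K := 2 * C₂ * (2:ℝ) ^ γ / (2 * p₀ - 1) with hKdef
  have hK : 0 ≤ K := by
    apply div_nonneg _ hP.le
    have : (0:ℝ) ≤ (2:ℝ) ^ γ := (Real.rpow_pos_of_pos two_pos γ).le
    positivity
  refine ⟨(p:ℝ) * 2^(p-1) * (Real.sqrt 2 * a^(p-1) * K + K^p), ?_⟩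
  intro h hh hh1 x
  set y := proj γ h x with hydef
  set u := 1 + ‖y‖^2 with hudef
  have hu1 : (1:ℝ) ≤ u := by nlinarith [norm_nonneg y, sq_nonneg ‖y‖]
  have hu0 : (0:ℝ) ≤ u := by linarith
  set H := h ^ (-(1:ℝ)/2) with hHdef
  have hHpos : (0:ℝ) < H := Real.rpow_pos_of_pos hh _
  -- norm bound on the projection
  have hc : (0:ℝ) < h ^ (-(1:ℝ)/(2*γ)) := Real.rpow_pos_of_pos hh _
  have hynorm : ‖y‖ ≤ h ^ (-(1:ℝ)/(2*γ)) := by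
    rw [hydef]
    unfold proj
    rcases eq_or_ne x 0 with rfl | hx0
    · simpa using hc.le
    · have hxn : 0 < ‖x‖ := norm_pos_iff.mpr hx0
      rw [norm_smul, Real.norm_eq_abs,
        abs_of_nonneg (le_min zero_le_one (by positivity))]
      calc min 1 (h ^ (-(1:ℝ)/(2*γ)) * ‖x‖⁻¹) * ‖x‖
          ≤ (h ^ (-(1:ℝ)/(2*γ)) * ‖x‖⁻¹) * ‖x‖ :=
            mul_le_mul_of_nonneg_right (min_le_right _ _) hxn.le
        _ = h ^ (-(1:ℝ)/(2*γ)) := by field_simp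
  -- rpow facts
  have hexp : (-(1:ℝ)/(2*γ)) * γ = -(1:ℝ)/2 := by field_simp
  have hpowγ : (h ^ (-(1:ℝ)/(2*γ))) ^ γ = H := by
    rw [hHdef, ← Real.rpow_mul hh.le, hexp]
  have hc1 : (1:ℝ) ≤ h ^ (-(1:ℝ)/(2*γ)) := by
    have := Real.rpow_le_rpow_of_exponent_ge hh hh1
      (show -(1:ℝ)/(2*γ) ≤ 0 from div_nonpos_of_nonpos_of_nonneg (by norm_num) (by linarith))
    rwa [Real.rpow_zero] at this
  have HH : H * H = h ^ (-1:ℝ) := by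
    rw [hHdef, ← Real.rpow_add hh]; norm_num
  have hHp : H ^ p = h ^ (-(p:ℝ)/2) := by
    rw [hHdef, ← Real.rpow_natCast (h ^ (-(1:ℝ)/2)) p, ← Real.rpow_mul hh.le]
    congr 1; ring
  have hm1 : h ^ (-1:ℝ) ≤ h ^ (-(p:ℝ)/2) := by
    apply Real.rpow_le_rpow_of_exponent_ge hh hh1
    have : (2:ℝ) ≤ (p:ℝ) := by exact_mod_cast hp
    linarith
  have hu2 : u ≤ 2 * h ^ (-1:ℝ) := by
    have h1 : ‖y‖^2 ≤ (h ^ (-(1:ℝ)/(2*γ)))^2 := by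
      apply pow_le_pow_left₀ (norm_nonneg y) hynorm
    have h2 : (h ^ (-(1:ℝ)/(2*γ)))^2 = h ^ ((-(1:ℝ)/(2*γ)) * 2) := by
      rw [← Real.rpow_natCast (h ^ (-(1:ℝ)/(2*γ))) 2, ← Real.rpow_mul hh.le]
      norm_num
    have h3 : h ^ ((-(1:ℝ)/(2*γ)) * 2) ≤ h ^ (-1:ℝ) := by
      apply Real.rpow_le_rpow_of_exponent_ge hh hh1
      rw [div_mul_eq_mul_div, le_div_iff₀ (by positivity)]
      nlinarith
    have h4 : (1:ℝ) ≤ h ^ (-1:ℝ) := by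
      have := Real.rpow_le_rpow_of_exponent_ge hh hh1 (show (-1:ℝ) ≤ 0 by norm_num)
      rwa [Real.rpow_zero] at this
    rw [hudef]; linarith
  have hsqu : Real.sqrt u ≤ Real.sqrt 2 * H := by
    calc Real.sqrt u ≤ Real.sqrt (2 * h ^ (-1:ℝ)) := Real.sqrt_le_sqrt hu2
      _ = Real.sqrt 2 * Real.sqrt (h ^ (-1:ℝ)) := Real.sqrt_mul (by norm_num) _
      _ = Real.sqrt 2 * H := by
          congr 1
          rw [Real.sqrt_eq_rpow, hHdef, ← Real.rpow_mul hh.le]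
          norm_num
  have hyu : ‖y‖ ≤ Real.sqrt u := by
    rw [show ‖y‖ = Real.sqrt (‖y‖^2) by rw [Real.sqrt_sq (norm_nonneg y)]]
    apply Real.sqrt_le_sqrt; rw [hudef]; linarith [Real.sqrt_sq (norm_nonneg y)]
  have h1γ : (1 + ‖y‖) ^ γ ≤ (2:ℝ)^γ * H := by
    have h1 : 1 + ‖y‖ ≤ 2 * h ^ (-(1:ℝ)/(2*γ)) := by linarith
    calc (1 + ‖y‖) ^ γ ≤ (2 * h ^ (-(1:ℝ)/(2*γ))) ^ γ :=
          Real.rpow_le_rpow (by positivity) h1 hγ0.le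
      _ = (2:ℝ)^γ * (h ^ (-(1:ℝ)/(2*γ))) ^ γ := Real.mul_rpow (by norm_num) hc.le
      _ = (2:ℝ)^γ * H := by rw [hpowγ]
  -- coercivity bound
  set S := ∑ j, ‖g j y‖^2 with hSdef
  have hS0 : 0 ≤ S := Finset.sum_nonneg (fun j _ => sq_nonneg _)
  have hinner : -(‖y‖ * ‖f y‖) ≤ ⟪y, f y⟫ :=
    (abs_le.mp (abs_real_inner_le_norm y (f y))).1
  have hfy : ‖f y‖ ≤ C₂ * ((2:ℝ)^γ * H) :=
    le_trans (hf y) (mul_le_mul_of_nonneg_left h1γ hC₂)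
  have h2 : ‖y‖ * ‖f y‖ ≤ Real.sqrt u * (C₂ * ((2:ℝ)^γ * H)) :=
    mul_le_mul hyu hfy (norm_nonneg _) (Real.sqrt_nonneg _)
  have hcS : (2 * p₀ - 1) * S ≤ L₁ * u + 2 * Real.sqrt u * (C₂ * ((2:ℝ)^γ * H)) := by
    have h1 := hcoer y
    rw [← hSdef, ← hudef] at h1
    linarith [h1, hinner, h2]
  have hSle : S ≤ a * u + K * (H * Real.sqrt u) := by
    have heq : a * u + K * (H * Real.sqrt u)
        = (L₁ * u + 2 * Real.sqrt u * (C₂ * ((2:ℝ)^γ * H))) / (2 * p₀ - 1) := by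
      rw [hadef, hKdef]; field_simp
    rw [heq, le_div_iff₀ hP, mul_comm]
    exact hcS
  -- final assembly
  have hKH : 0 ≤ K * (H * Real.sqrt u) :=
    mul_nonneg hK (mul_nonneg hHpos.le (Real.sqrt_nonneg _))
  have hau : 0 ≤ a * u := mul_nonneg ha hu0
  have hstep : S ^ p ≤ (a*u + K*(H*Real.sqrt u))^p := pow_le_pow_left₀ hS0 hSle p
  have hmain := aux_pow (a*u) (K*(H*Real.sqrt u)) hau hKH hp1
  have hHu : H * Real.sqrt u ≤ Real.sqrt 2 * h ^ (-(p:ℝ)/2) := by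
    calc H * Real.sqrt u ≤ H * (Real.sqrt 2 * H) :=
          mul_le_mul_of_nonneg_left hsqu hHpos.le
      _ = Real.sqrt 2 * (H*H) := by ring
      _ = Real.sqrt 2 * h ^ (-1:ℝ) := by rw [HH]
      _ ≤ Real.sqrt 2 * h ^ (-(p:ℝ)/2) :=
          mul_le_mul_of_nonneg_left hm1 (Real.sqrt_nonneg _)
  have hsqp : (Real.sqrt u)^p ≤ u^(p-1) := by
    have h1le : 1 ≤ Real.sqrt u := Real.one_le_sqrt.mpr hu1
    calc (Real.sqrt u)^p ≤ (Real.sqrt u)^(2*(p-1)) := pow_le_pow_right₀ h1le (by omega)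
      _ = ((Real.sqrt u)^2)^(p-1) := by rw [pow_mul]
      _ = u^(p-1) := by rw [Real.sq_sqrt hu0]
  have e1 : (a*u)^(p-1) * (K*(H*Real.sqrt u))
      ≤ Real.sqrt 2 * a^(p-1) * K * (h ^ (-(p:ℝ)/2) * u^(p-1)) := by
    rw [mul_pow]
    calc a^(p-1)*u^(p-1) * (K*(H*Real.sqrt u))
        ≤ a^(p-1)*u^(p-1) * (K*(Real.sqrt 2 * h ^ (-(p:ℝ)/2))) := by
          apply mul_le_mul_of_nonneg_left (mul_le_mul_of_nonneg_left hHu hK)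
          exact mul_nonneg (pow_nonneg ha _) (pow_nonneg hu0 _)
      _ = Real.sqrt 2 * a^(p-1) * K * (h ^ (-(p:ℝ)/2) * u^(p-1)) := by ring
  have e2 : (K*(H*Real.sqrt u))^p ≤ K^p * (h ^ (-(p:ℝ)/2) * u^(p-1)) := by
    have hrw : (K*(H*Real.sqrt u))^p = K^p * (H^p * (Real.sqrt u)^p) := by
      rw [mul_pow, mul_pow]
    rw [hrw, hHp]
    apply mul_le_mul_of_nonneg_left _ (pow_nonneg hK p)
    exact mul_le_mul_of_nonneg_left hsqp (Real.rpow_nonneg hh.le _)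
  have hcross := add_le_add e1 e2
  have hfin : 0 ≤ (p:ℝ) * 2^(p-1) := by positivity
  calc S ^ p ≤ (a*u + K*(H*Real.sqrt u))^p := hstep
    _ ≤ (a*u)^p + (p:ℝ) * 2^(p-1) * ((a*u)^(p-1)*(K*(H*Real.sqrt u)) + (K*(H*Real.sqrt u))^p) := hmain
    _ ≤ (a*u)^p + (p:ℝ) * 2^(p-1) *
        ((Real.sqrt 2 * a^(p-1) * K + K^p) * (h ^ (-(p:ℝ)/2) * u^(p-1))) := by
        have := mul_le_mul_of_nonneg_left hcross hfin
        have heq : Real.sqrt 2 * a^(p-1) * K * (h ^ (-(p:ℝ)/2) * u^(p-1))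
            + K^p * (h ^ (-(p:ℝ)/2) * u^(p-1))
            = (Real.sqrt 2 * a^(p-1) * K + K^p) * (h ^ (-(p:ℝ)/2) * u^(p-1)) := by ring
        rw [← heq]; linarith
    _ = a^p * u^p + (p:ℝ) * 2^(p-1) * (Real.sqrt 2 * a^(p-1) * K + K^p)
          * h ^ (-(p:ℝ)/2) * u^(p-1) := by rw [mul_pow]; ring
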